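/- Let A and A_α = A + αI both be Sylvester, with α ≠ 0 a real number. Let X^Q solve A X + X Aᵀ + Q = 0, X_α^Q solve A_α X + X A_αᵀ + Q = 0, X_α^{X^Q} solve A_α X + X A_αᵀ + X^Q = 0, and X^{X_α^Q} solve A X + X Aᵀ + X_α^Q = 0. Then X_α^{X^Q} = (X_α^Q - X^Q)/(2α) = X^{X_α^Q}. -/

import Mathlib

open Matrix MeasureTheory

/-- `A` is Sylvester: no two complex eigenvalues `λᵢ, λⱼ` (possibly `i = j`)
satisfy `λᵢ = -λⱼ`. -/
def IsSylvester {n : ℕ} (A : Matrix (Fin n) (Fin n) ℝ) : Prop :=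
  ∀ μ ∈ spectrum ℂ (A.map (Complex.ofReal)),
    ∀ ν ∈ spectrum ℂ (A.map (Complex.ofReal)), μ ≠ -ν

/-- `A` is stable (Hurwitz): every complex eigenvalue has negative real part. -/
def IsStableMatrix {n : ℕ} (A : Matrix (Fin n) (Fin n) ℝ) : Prop :=
  ∀ μ ∈ spectrum ℂ (A.map (Complex.ofReal)), μ.re < 0

/-- The matrix exponential `e^{tA}`. -/
noncomputable def mexp {n : ℕ} (A : Matrix (Fin n) (Fin n) ℝ) (t : ℝ) :
    Matrix (Fin n) (Fin n) ℝ :=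
  NormedSpace.exp (t • A)

/-! Write `L_S X = S X + X Sᵀ`. Since `L_{A+αI} X = L_A X + 2α X`, the matrix
`W = (X_α^Q - X^Q)/(2α)` satisfies `L_A W = -X_α^Q` and `L_{A+αI} W = -X^Q`, so it suffices that
`L_S` is injective for Sylvester `S`. Over `ℂ`, `L_S D = 0` reads `S D = D (-Sᵀ)` with `S` and
`-Sᵀ` of disjoint spectra; then `χ_S(-Sᵀ)` is invertible while `D χ_S(-Sᵀ) = χ_S(S) D = 0` by
Cayley–Hamilton. -/

open Polynomial

theorem Polynomial.aeval_mul_eq_mul_aeval {K R : Type*} [CommSemiring K] [Semiring R]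
    [Algebra K R] {a b x : R} (h : a * x = x * b) (p : K[X]) :
    aeval a p * x = x * aeval b p := by
  induction p using Polynomial.induction_on' with
  | add p q hp hq => simp only [map_add, add_mul, mul_add, hp, hq]
  | monomial k c =>
    have hpow : a ^ k * x = x * b ^ k := (SemiconjBy.pow_right h.symm k).symm
    rw [aeval_monomial, aeval_monomial, mul_assoc, hpow, ← mul_assoc, Algebra.commutes, mul_assoc]

namespace Matrix

variable {ι K : Type*} [Fintype ι] [DecidableEq ι]

theorem spectrum_transpose [CommRing K] (M : Matrix ι ι K) : spectrum K Mᵀ = spectrum K M := by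
  ext μ
  rw [spectrum.mem_iff, spectrum.mem_iff, ← isUnit_transpose, transpose_sub, transpose_transpose,
    Algebra.algebraMap_eq_smul_one, transpose_smul, transpose_one]

theorem eq_zero_of_mul_eq_mul_of_disjoint_spectrum [Field K] [IsAlgClosed K]
    {A B X : Matrix ι ι K} (hAB : Disjoint (spectrum K A) (spectrum K B)) (h : A * X = X * B) :
    X = 0 := by
  rcases isEmpty_or_nonempty ι with hι | hι
  · exact Subsingleton.elim _ _
  have hunit : IsUnit (aeval B A.charpoly) := by
    rw [← spectrum.zero_notMem_iff K, spectrum.map_polynomial_aeval_of_degree_pos _ _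
      (by simp [charpoly_degree_eq_dim, Fintype.card_pos])]
    rintro ⟨μ, hμB, hμ⟩
    exact hAB.notMem_of_mem_right hμB (mem_spectrum_iff_isRoot_charpoly.mpr hμ)
  rw [← hunit.mul_left_eq_zero, ← aeval_mul_eq_mul_aeval h, aeval_self_charpoly, zero_mul]

variable {R : Type*} [CommRing R]

def lyapunov (S : Matrix ι ι R) : Matrix ι ι R →ₗ[R] Matrix ι ι R :=
  LinearMap.mulLeft R S + LinearMap.mulRight R Sᵀ

@[simp]
theorem lyapunov_apply (S X : Matrix ι ι R) : lyapunov S X = S * X + X * Sᵀ := rfl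

theorem lyapunov_add_smul_one (S : Matrix ι ι R) (a : R) (X : Matrix ι ι R) :
    lyapunov (S + a • 1) X = lyapunov S X + (2 * a) • X := by
  simp only [lyapunov_apply, transpose_add, transpose_smul, transpose_one, add_mul, mul_add,
    Matrix.smul_mul, Matrix.mul_smul, one_mul, mul_one]
  module

end Matrix

open Matrix

theorem IsSylvester.lyapunov_injective {n : ℕ} {S : Matrix (Fin n) (Fin n) ℝ}
    (hS : IsSylvester S) : Function.Injective (lyapunov S) := by
  rw [injective_iff_map_eq_zero]
  intro D hD
  let φ := Complex.ofRealHom.mapMatrix (m := Fin n)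
  have hSD : φ S * φ D = φ D * -(φ S)ᵀ := by
    have := congrArg φ hD
    simp only [lyapunov_apply, map_add, map_mul, map_zero] at this
    rw [mul_neg]
    exact eq_neg_of_add_eq_zero_left this
  have hdisj : Disjoint (spectrum ℂ (φ S)) (spectrum ℂ (-(φ S)ᵀ)) := by
    refine Set.disjoint_left.mpr fun μ hμ hμ' => ?_
    rw [← spectrum.neg_eq, spectrum_transpose, Set.mem_neg] at hμ'
    exact hS μ hμ (-μ) hμ' (neg_neg μ).symm
  exact (map_eq_zero_iff φ (map_injective Complex.ofReal_injective)).mp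
    (eq_zero_of_mul_eq_mul_of_disjoint_spectrum hdisj hSD)

theorem lyapunov_shifted_difference {n : ℕ}
    (A Q XQ XaQ Y Z : Matrix (Fin n) (Fin n) ℝ) (α : ℝ) (hα : α ≠ 0)
    (hA : IsSylvester A) (hAa : IsSylvester (A + α • (1 : Matrix (Fin n) (Fin n) ℝ)))
    (hXQ : A * XQ + XQ * Aᵀ + Q = 0)
    (hXaQ : (A + α • 1) * XaQ + XaQ * (A + α • 1)ᵀ + Q = 0)
    (hY : (A + α • 1) * Y + Y * (A + α • 1)ᵀ + XQ = 0)
    (hZ : A * Z + Z * Aᵀ + XaQ = 0) :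
    Y = (2 * α)⁻¹ • (XaQ - XQ) ∧ Z = (2 * α)⁻¹ • (XaQ - XQ) := by
  simp only [← lyapunov_apply, lyapunov_add_smul_one] at hXQ hXaQ hY hZ
  have h2α : 2 * α ≠ 0 := mul_ne_zero two_ne_zero hα
  rw [eq_inv_smul_iff₀ h2α, eq_inv_smul_iff₀ h2α]
  constructor
  · apply hAa.lyapunov_injective
    rw [map_smul, map_sub, lyapunov_add_smul_one, lyapunov_add_smul_one, lyapunov_add_smul_one]
    linear_combination (norm := module) (2 * α) • hY - hXaQ + hXQ
  · apply hA.lyapunov_injective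
    rw [map_smul, map_sub]
    linear_combination (norm := module) (2 * α) • hZ - hXaQ + hXQ
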